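/- Let w_1, …, w_k be positive integers with w_i ≤ B/2 for all i, where B = Σ_{i=1}^k w_i. Consider the cyclic DPG with agents N = {1,…,k}, relationship sets M_i = {i+1} for i < k and M_k = {1}, and ideal distances d_i(i+1) = w_i / B (indices taken cyclically). Then this DPG admits a jump stable location profile if and only if there exists a subset X ⊆ {1,…,k} with Σ_{i ∈ X} w_i = Σ_{i ∉ X} w_i. -/

import Mathlib

open Finset

/-- A distance preservation game (DPG): a finite set of agents `N`, for each agent `i` a
relationship set `M i ⊆ N \ {i}`, and an ideal distance `d i j ∈ [0,1]` for each `j ∈ M i`. -/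
structure DPG (N : Type) [Fintype N] [DecidableEq N] where
  M : N → Finset N
  notMem_self : ∀ i, i ∉ M i
  d : N → N → ℝ
  d_nonneg : ∀ i j, j ∈ M i → 0 ≤ d i j
  d_le_one : ∀ i j, j ∈ M i → d i j ≤ 1

variable {N : Type} [Fintype N] [DecidableEq N]

/-- The utility of agent `i` from agent `j` under location profile `A`. -/
def DPG.utilPair (I : DPG N) (A : N → ℝ) (i j : N) : ℝ :=
  1 - |(|A i - A j|) - I.d i j|

/-- The utility of agent `i` under location profile `A`. -/
def DPG.util (I : DPG N) (A : N → ℝ) (i : N) : ℝ :=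
  ∑ j ∈ I.M i, I.utilPair A i j

/-- The social welfare of a location profile. -/
def DPG.SW (I : DPG N) (A : N → ℝ) : ℝ := ∑ i, I.util A i

/-- A valid location profile: every agent is located in the unit interval. -/
def IsProfile (A : N → ℝ) : Prop := ∀ i, A i ∈ Set.Icc (0:ℝ) 1

/-- A location profile is jump stable if no agent can increase their utility by jumping
to another location in the unit interval. -/
def DPG.JumpStable (I : DPG N) (A : N → ℝ) : Prop :=
  ∀ i : N, ∀ x ∈ Set.Icc (0:ℝ) 1, I.util (Function.update A i x) i ≤ I.util A i

/-- A DPG is symmetric if `j ∈ M i` implies `i ∈ M j` and `d i j = d j i`. -/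
def DPG.Symmetric (I : DPG N) : Prop :=
  ∀ i j, j ∈ I.M i → i ∈ I.M j ∧ I.d i j = I.d j i

/-!
Each agent cares about a single other agent, and all ideal distances are at most `1/2`, so from
anywhere in `[0,1]` an agent can jump to a point at exactly its ideal distance and get the maximal
utility `1`. Hence a profile is jump stable iff every agent sits at exactly its ideal distance
`w i / B` from its successor. Going once around the cycle, the signed steps
`A (i+1) - A i = ±w i / B` sum to zero, which is precisely a partition of the weights into two
halves of equal weight.
Conversely, such a partition prescribes the signs of the steps, and the partial sums of the signed
steps, shifted by half the total distance, stay inside `[0,1]`.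
-/

theorem exists_mem_Icc_abs_sub_eq {a d : ℝ} (ha : a ∈ Set.Icc (0 : ℝ) 1) (hd₀ : 0 ≤ d)
    (hd : d ≤ 1 / 2) : ∃ x ∈ Set.Icc (0 : ℝ) 1, |x - a| = d := by
  obtain ⟨ha₀, ha₁⟩ := ha
  rcases le_total d a with hda | had
  · refine ⟨a - d, ⟨by linarith, by linarith⟩, ?_⟩
    rw [sub_sub_cancel_left, abs_neg, abs_of_nonneg hd₀]
  · refine ⟨a + d, ⟨by linarith, by linarith⟩, ?_⟩
    rw [add_sub_cancel_left, abs_of_nonneg hd₀]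

namespace DPG

theorem util_eq_of_M_eq_singleton (I : DPG N) {next : N → N} (hM : ∀ i, I.M i = {next i})
    (A : N → ℝ) (i : N) : I.util A i = 1 - |(|A i - A (next i)|) - I.d i (next i)| := by
  rw [util, hM, sum_singleton, utilPair]

theorem jumpStable_iff_of_M_eq_singleton (I : DPG N) {next : N → N}
    (hM : ∀ i, I.M i = {next i}) (hd : ∀ i, I.d i (next i) ≤ 1 / 2) {A : N → ℝ}
    (hA : IsProfile A) : I.JumpStable A ↔ ∀ i, |A i - A (next i)| = I.d i (next i) := by
  have hnext : ∀ i, next i ≠ i := fun i h =>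
    I.notMem_self i (by rw [hM, h]; exact mem_singleton_self i)
  have hd₀ : ∀ i, 0 ≤ I.d i (next i) := fun i =>
    I.d_nonneg i _ (by rw [hM]; exact mem_singleton_self _)
  have hjump : ∀ i x,
      I.util (Function.update A i x) i = 1 - |(|x - A (next i)|) - I.d i (next i)| :=
    fun i x => by
      rw [util_eq_of_M_eq_singleton I hM, Function.update_self, Function.update_of_ne (hnext i)]
  constructor
  · intro hstable i
    obtain ⟨x, hx, hxd⟩ := exists_mem_Icc_abs_sub_eq (hA (next i)) (hd₀ i) (hd i)
    have hle := hstable i x hx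
    rw [hjump, hxd, sub_self, abs_zero, util_eq_of_M_eq_singleton I hM] at hle
    have hzero : |(|A i - A (next i)|) - I.d i (next i)| = 0 :=
      le_antisymm (by linarith) (abs_nonneg _)
    exact sub_eq_zero.mp (abs_eq_zero.mp hzero)
  · intro hdist i x _
    rw [hjump, util_eq_of_M_eq_singleton I hM, hdist, sub_self, abs_zero]
    linarith [abs_nonneg (|x - A (next i)| - I.d i (next i))]

end DPG

theorem exists_sum_abs_eq_sum_compl_abs {ι : Type*} [Fintype ι] [DecidableEq ι] {a : ι → ℝ}
    (ha : ∑ i, a i = 0) : ∃ X : Finset ι, ∑ i ∈ X, |a i| = ∑ i ∈ Xᶜ, |a i| := by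
  set X : Finset ι := {i | 0 ≤ a i}
  refine ⟨X, ?_⟩
  have hX : ∑ i ∈ X, |a i| = ∑ i ∈ X, a i :=
    sum_congr rfl fun i hi => abs_of_nonneg (mem_filter.mp hi).2
  have hXc : ∑ i ∈ Xᶜ, |a i| = -∑ i ∈ Xᶜ, a i := by
    rw [← sum_neg_distrib]
    exact sum_congr rfl fun i hi => abs_of_neg (by simpa [X] using hi)
  rw [hX, hXc, eq_neg_iff_add_eq_zero, sum_add_sum_compl, ha]

theorem Fin.sum_Iio_add_one_of_sum_eq_zero {M : Type*} [AddCommGroup M] {k : ℕ} [NeZero k]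
    {s : Fin k → M} (hs : ∑ i, s i = 0) (i : Fin k) :
    ∑ j ∈ Iio (i + 1), s j = ∑ j ∈ Iio i, s j + s i := by
  have hval : ((i + 1 : Fin k) : ℕ) = (i + 1) % k := by simp [Fin.val_add]
  rcases Nat.lt_or_ge (i + 1) k with hlt | hge
  · have : Iio (i + 1) = insert i (Iio i) := by
      ext j
      simp only [mem_Iio, mem_insert, Fin.lt_def, hval, Nat.mod_eq_of_lt hlt, Fin.ext_iff]
      omega
    rw [this, sum_insert (by simp), add_comm]
  · have heq : (i : ℕ) + 1 = k := by omega
    have h0 : Iio (i + 1) = ∅ := by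
      ext j
      simp [Fin.lt_def, hval, heq]
    have hi : Iio i = univ.erase i := by
      ext j
      simp only [mem_Iio, mem_erase, mem_univ, and_true, Fin.lt_def, Fin.ne_iff_vne]
      have := j.isLt
      omega
    rw [h0, hi, sum_erase_add _ _ (mem_univ i), hs, sum_empty]

theorem Fin.exists_sum_eq_sum_compl_of_abs_sub_add_one_eq {k : ℕ} [NeZero k] {A δ : Fin k → ℝ}
    (h : ∀ i, |A i - A (i + 1)| = δ i) : ∃ X : Finset (Fin k), ∑ i ∈ X, δ i = ∑ i ∈ Xᶜ, δ i := by
  have hcycle : ∑ i, (A (i + 1) - A i) = 0 := by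
    rw [sum_sub_distrib, sub_eq_zero]
    exact Equiv.sum_comp (Equiv.addRight 1) A
  simpa only [abs_sub_comm, h] using exists_sum_abs_eq_sum_compl_abs hcycle

theorem sum_ite_mem_neg_mem_Icc {ι : Type*} [Fintype ι] [DecidableEq ι] {δ : ι → ℝ}
    (hδ : ∀ i, 0 ≤ δ i) (X S : Finset ι) :
    ∑ i ∈ S, (if i ∈ X then δ i else -δ i) ∈ Set.Icc (-∑ i ∈ Xᶜ, δ i) (∑ i ∈ X, δ i) := by
  rw [sum_ite, sum_neg_distrib]
  have hpos : ∑ i ∈ S with i ∈ X, δ i ≤ ∑ i ∈ X, δ i :=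
    sum_le_sum_of_subset_of_nonneg (fun i hi => (mem_filter.mp hi).2) fun i _ _ => hδ i
  have hneg : ∑ i ∈ S with i ∉ X, δ i ≤ ∑ i ∈ Xᶜ, δ i :=
    sum_le_sum_of_subset_of_nonneg (fun i hi => mem_compl.mpr (mem_filter.mp hi).2)
      fun i _ _ => hδ i
  have := sum_nonneg fun i (_ : i ∈ S.filter (· ∈ X)) => hδ i
  have := sum_nonneg fun i (_ : i ∈ S.filter (· ∉ X)) => hδ i
  constructor <;> linarith

theorem Fin.exists_isProfile_abs_sub_add_one_eq {k : ℕ} [NeZero k] {δ : Fin k → ℝ}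
    (hδ : ∀ i, 0 ≤ δ i) (hδ₁ : ∑ i, δ i ≤ 1) {X : Finset (Fin k)}
    (hX : ∑ i ∈ X, δ i = ∑ i ∈ Xᶜ, δ i) :
    ∃ A : Fin k → ℝ, IsProfile A ∧ ∀ i, |A i - A (i + 1)| = δ i := by
  set s : Fin k → ℝ := fun i => if i ∈ X then δ i else -δ i
  have hs : ∑ i, s i = 0 := by
    simp only [s, sum_ite, sum_neg_distrib, filter_mem_eq_inter, univ_inter,
      filter_notMem_eq_sdiff, ← compl_eq_univ_sdiff, hX, add_neg_cancel]
  refine ⟨fun i => ∑ j ∈ Xᶜ, δ j + ∑ j ∈ Iio i, s j, fun i => ?_, fun i => ?_⟩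
  · obtain ⟨hlo, hhi⟩ := sum_ite_mem_neg_mem_Icc hδ X (Iio i)
    rw [← sum_add_sum_compl X δ] at hδ₁
    constructor <;> linarith
  · dsimp only
    rw [Fin.sum_Iio_add_one_of_sum_eq_zero hs, abs_sub_comm, add_sub_add_left_eq_sub,
      add_sub_cancel_left]
    by_cases hi : i ∈ X <;> simp [s, hi, abs_of_nonneg (hδ i)]

/-- The cyclic DPG built from positive integer weights `w i ≤ B/2` (with `B = ∑ w i`,
`M i = {i+1}` cyclically and `d i (i+1) = w i / B`) admits a jump stable location profile
iff the weights can be partitioned into two sets of equal total weight. -/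
theorem stmt3 (k : ℕ) [NeZero k] (w : Fin k → ℕ) (hw : ∀ i, 0 < w i)
    (B : ℕ) (hB : B = ∑ i, w i) (hw2 : ∀ i, 2 * w i ≤ B)
    (I : DPG (Fin k)) (hM : ∀ i : Fin k, I.M i = {i + 1})
    (hd : ∀ i : Fin k, I.d i (i + 1) = (w i : ℝ) / B) :
    (∃ A : Fin k → ℝ, IsProfile A ∧ I.JumpStable A) ↔
      ∃ X : Finset (Fin k), ∑ i ∈ X, w i = ∑ i ∈ Xᶜ, w i := by
  have hB₀ : (B : ℝ) ≠ 0 := by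
    rw [hB]; exact_mod_cast (sum_pos (fun i _ => hw i) univ_nonempty).ne'
  have hd_half : ∀ i, I.d i (i + 1) ≤ 1 / 2 := fun i => by
    have : (2 * w i : ℝ) ≤ B := by exact_mod_cast hw2 i
    rw [hd, div_le_div_iff₀ (by positivity) (by norm_num)]
    linarith
  have hsum_one : ∑ i, (w i : ℝ) / B = 1 := by
    rw [← sum_div, div_eq_one_iff_eq hB₀, hB, Nat.cast_sum]
  have hbalanced : ∀ X : Finset (Fin k),
      ∑ i ∈ X, (w i : ℝ) / B = ∑ i ∈ Xᶜ, (w i : ℝ) / B ↔ ∑ i ∈ X, w i = ∑ i ∈ Xᶜ, w i := by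
    intro X
    rw [← sum_div, ← sum_div, div_left_inj' hB₀]
    exact_mod_cast Iff.rfl
  have hstable : ∀ A, IsProfile A → (I.JumpStable A ↔ ∀ i, |A i - A (i + 1)| = (w i : ℝ) / B) :=
    fun A hA => by simpa only [hd] using I.jumpStable_iff_of_M_eq_singleton hM hd_half hA
  constructor
  · rintro ⟨A, hA, hJ⟩
    obtain ⟨X, hX⟩ := Fin.exists_sum_eq_sum_compl_of_abs_sub_add_one_eq ((hstable A hA).1 hJ)
    exact ⟨X, (hbalanced X).1 hX⟩
  · rintro ⟨X, hX⟩
    obtain ⟨A, hA, hdist⟩ := Fin.exists_isProfile_abs_sub_add_one_eq (fun i => by positivity)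
      hsum_one.le ((hbalanced X).2 hX)
    exact ⟨A, hA, (hstable A hA).2 hdist⟩
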